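/- arXiv:1109.5718 — 8 statements merged into one kernel-verified Lean document; each statement's English description precedes it below -/
import Mathlib

section
/- Let k be an infinite field of any characteristic and R = k[x,y]. For any homogeneous ideal I ⊆ R with R/I artinian, the algebra R/I has the Weak Lefschetz Property: there exists a linear form ℓ such that for all i, the map ×ℓ : [R/I]_i → [R/I]_{i+1} has maximal rank. -/
/-!
Let `e` be the least degree of a nonzero form in `I`. In degrees `i` with `i + 1 < e`,
multiplication by any nonzero linear form is injective, since `I` has no nonzero form of degree
`i + 1`. For the other degrees pick a form `f ∈ I` of degree `e` and a point `x` with `f(x) ≠ 0`,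
and let `ℓ` be the linear form vanishing at `x`. A binary form that vanishes at `x` is divisible
by `ℓ`, so every form `g` of degree `d ≥ e` is `ℓ h` plus a scalar multiple of `f X₀^(d - e) ∈ I`.
-/

open MvPolynomial

/-- The dimension of the degree-`i` component of the graded algebra `R/I`, where
`R = k[x_1,...,x_r]` is standard graded: it is the image of the space of homogeneous
polynomials of degree `i` in the quotient. -/
noncomputable def hilb {k : Type*} [Field k] {σ : Type*} (I : Ideal (MvPolynomial σ k))
    (i : ℕ) : ℕ :=
  Module.finrank k ((homogeneousSubmodule σ k i).map (Ideal.Quotient.mkₐ k I).toLinearMap)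

/-- Injectivity of the multiplication map `×f : [R/I]_i → [R/I]_{i + deg f}`. -/
def mulInj {k : Type*} [Field k] {σ : Type*} (I : Ideal (MvPolynomial σ k))
    (f : MvPolynomial σ k) (i : ℕ) : Prop :=
  ∀ g ∈ homogeneousSubmodule σ k i, f * g ∈ I → g ∈ I

/-- Surjectivity of the multiplication map `×f : [R/I]_i → [R/I]_j` (with `j = i + deg f`). -/
def mulSurj {k : Type*} [Field k] {σ : Type*} (I : Ideal (MvPolynomial σ k))
    (f : MvPolynomial σ k) (i j : ℕ) : Prop :=
  ∀ g ∈ homogeneousSubmodule σ k j, ∃ h ∈ homogeneousSubmodule σ k i, g - f * h ∈ I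

namespace MvPolynomial

variable {σ R : Type*}

theorem exists_eval_ne_zero [CommRing R] [IsDomain R] [Infinite R] {p : MvPolynomial σ R}
    (hp : p ≠ 0) : ∃ x : σ → R, eval x p ≠ 0 :=
  not_forall.mp fun h => hp (MvPolynomial.funext fun x => by simpa using h x)

theorem sub_aeval_mem [CommRing R] {J : Ideal (MvPolynomial σ R)} {s : σ → MvPolynomial σ R}
    (hs : ∀ j, X j - s j ∈ J) (p : MvPolynomial σ R) : p - aeval s p ∈ J := by
  have hmk : (Ideal.Quotient.mkₐ R J).comp (aeval s) = Ideal.Quotient.mkₐ R J :=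
    algHom_ext fun j => by simpa [Ideal.Quotient.eq] using J.neg_mem (hs j)
  exact Ideal.Quotient.eq.mp (DFunLike.congr_fun hmk p).symm

theorem IsHomogeneous.aeval_algebraMap_mul [CommSemiring R] {S : Type*} [CommSemiring S]
    [Algebra R S] {φ : MvPolynomial σ R} {n : ℕ} (hφ : φ.IsHomogeneous n) (v : σ → R) (s : S) :
    MvPolynomial.aeval (fun i => algebraMap R S (v i) * s) φ =
      algebraMap R S (eval v φ) * s ^ n := by
  conv_lhs => rw [φ.as_sum]
  conv_rhs => rw [φ.as_sum]
  simp only [map_sum, Finset.sum_mul, aeval_monomial, eval_monomial, mul_pow, Finsupp.prod_mul]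
  refine Finset.sum_congr rfl fun d hd => ?_
  rw [map_mul, map_finsuppProd, mul_assoc, hφ.degree_eq_sum_deg_support hd,
    ← Finset.prod_pow_eq_pow_sum]
  simp only [map_pow, Finsupp.prod]

attribute [local instance] gradedAlgebra in
theorem IsHomogeneous.exists_isHomogeneous_eq_mul_of_dvd [CommSemiring R]
    {ℓ D : MvPolynomial σ R} {m n : ℕ} (hℓ : ℓ.IsHomogeneous m) (hD : D.IsHomogeneous (m + n))
    (hdvd : ℓ ∣ D) : ∃ h : MvPolynomial σ R, h.IsHomogeneous n ∧ D = ℓ * h := by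
  obtain ⟨v, rfl⟩ := hdvd
  refine ⟨homogeneousComponent n v, homogeneousComponent_isHomogeneous n v, ?_⟩
  have := DirectSum.coe_decompose_mul_of_left_mem_of_le (homogeneousSubmodule σ R) (b := v)
    (n := m + n) hℓ (Nat.le_add_right m n)
  simpa only [← DirectSum.Decomposition.decompose'_eq, decomposition.decompose'_apply,
    Nat.add_sub_cancel_left, homogeneousComponent_of_mem hD, if_pos] using this

end MvPolynomial

theorem mulInj_of_isHomogeneous_mem_eq_zero {σ k : Type*} [Field k]
    {I : Ideal (MvPolynomial σ k)} {ℓ : MvPolynomial σ k} (hℓ : ℓ.IsHomogeneous 1) (hℓ0 : ℓ ≠ 0)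
    {i : ℕ} (hI : ∀ f ∈ I, f.IsHomogeneous (i + 1) → f = 0) : mulInj I ℓ i := by
  intro g hg hgI
  have hℓg : ℓ * g = 0 := hI _ hgI (by simpa [add_comm] using hℓ.mul hg)
  rw [(mul_eq_zero.mp hℓg).resolve_left hℓ0]
  exact I.zero_mem

section TwoVariables

variable {k : Type*} [Field k]

noncomputable def vanishingForm (x : Fin 2 → k) : MvPolynomial (Fin 2) k :=
  C (x 1) * X 0 - C (x 0) * X 1

theorem isHomogeneous_vanishingForm (x : Fin 2 → k) : (vanishingForm x).IsHomogeneous 1 :=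
  (isHomogeneous_C_mul_X _ _).sub (isHomogeneous_C_mul_X _ _)

theorem vanishingForm_ne_zero {x : Fin 2 → k} (hx : x 0 ≠ 0) : vanishingForm x ≠ 0 :=
  fun h => hx (by simpa [vanishingForm] using congrArg (eval ![0, 1]) h)

theorem vanishingForm_dvd {x : Fin 2 → k} (hx : x 0 ≠ 0) {D : MvPolynomial (Fin 2) k} {n : ℕ}
    (hD : D.IsHomogeneous n) (hDx : eval x D = 0) : vanishingForm x ∣ D := by
  -- modulo `ℓ = vanishingForm x` we have `X j ≡ x j • u`, hence `D ≡ D(x) • uⁿ = 0`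
  set u : MvPolynomial (Fin 2) k := C (x 0)⁻¹ * X 0
  have hC : (C (x 0) * C (x 0)⁻¹ : MvPolynomial (Fin 2) k) = 1 := by
    rw [← C_mul, mul_inv_cancel₀ hx, C_1]
  have hs : ∀ j, X j - C (x j) * u ∈ Ideal.span {vanishingForm x} := by
    rw [Fin.forall_fin_two]
    constructor
    · simp [u, ← mul_assoc, hC]
    · refine Ideal.mem_span_singleton.mpr ⟨-C (x 0)⁻¹, ?_⟩
      simp only [u, vanishingForm]
      linear_combination (-X 1) * hC
  have := sub_aeval_mem hs D
  rw [← algebraMap_eq, hD.aeval_algebraMap_mul, hDx, map_zero, zero_mul, sub_zero] at this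
  exact Ideal.mem_span_singleton.mp this

theorem mulSurj_vanishingForm {I : Ideal (MvPolynomial (Fin 2) k)} {x : Fin 2 → k}
    (hx : x 0 ≠ 0) {i : ℕ} {f : MvPolynomial (Fin 2) k} (hfI : f ∈ I)
    (hf : f.IsHomogeneous (i + 1)) (hfx : eval x f ≠ 0) :
    mulSurj I (vanishingForm x) i (i + 1) := by
  intro g hg
  set D := g - C (eval x g / eval x f) * f
  have hD : D.IsHomogeneous (1 + i) := by
    rw [add_comm]
    exact (mem_homogeneousSubmodule _ _ |>.mp hg).sub (hf.C_mul _)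
  have hDx : eval x D = 0 := by simp [D, div_mul_cancel₀ _ hfx]
  obtain ⟨h, hh, hDh⟩ := (isHomogeneous_vanishingForm x).exists_isHomogeneous_eq_mul_of_dvd hD
    (vanishingForm_dvd hx hD hDx)
  refine ⟨h, hh, ?_⟩
  rw [← hDh, sub_sub_cancel]
  exact I.mul_mem_left _ hfI

end TwoVariables

theorem stmt2_general (k : Type*) [Field k] [Infinite k] (I : Ideal (MvPolynomial (Fin 2) k)) :
    ∃ ℓ ∈ homogeneousSubmodule (Fin 2) k 1, ℓ ≠ 0 ∧
      ∀ i : ℕ, mulInj I ℓ i ∨ mulSurj I ℓ i (i + 1) := by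
  classical
  by_cases hI : ∃ n, ∃ f ∈ I, f.IsHomogeneous n ∧ f ≠ 0
  · obtain ⟨f₀, hf₀I, hf₀, hf₀0⟩ := Nat.find_spec hI
    obtain ⟨x, hx⟩ := exists_eval_ne_zero (mul_ne_zero (X_ne_zero (0 : Fin 2)) hf₀0)
    obtain ⟨hx0, hxf₀⟩ : x 0 ≠ 0 ∧ eval x f₀ ≠ 0 := by simpa using hx
    refine ⟨vanishingForm x, isHomogeneous_vanishingForm x, vanishingForm_ne_zero hx0,
      fun i => ?_⟩
    rcases lt_or_ge (i + 1) (Nat.find hI) with hi | hi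
    · exact Or.inl <| mulInj_of_isHomogeneous_mem_eq_zero (isHomogeneous_vanishingForm x)
        (vanishingForm_ne_zero hx0) fun f hfI hf => not_not.mp fun hf0 =>
          Nat.find_min hI hi ⟨f, hfI, hf, hf0⟩
    · have hf : (f₀ * X 0 ^ (i + 1 - Nat.find hI)).IsHomogeneous (i + 1) := by
        have := hf₀.mul (isHomogeneous_X_pow (0 : Fin 2) (i + 1 - Nat.find hI))
        rwa [Nat.add_sub_cancel' hi] at this
      exact Or.inr <| mulSurj_vanishingForm hx0 (I.mul_mem_right _ hf₀I) hf (by simp [hxf₀, hx0])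
  · push Not at hI
    exact ⟨X 0, isHomogeneous_X k 0, X_ne_zero 0, fun i => Or.inl <|
      mulInj_of_isHomogeneous_mem_eq_zero (isHomogeneous_X k 0) (X_ne_zero 0) (hI (i + 1))⟩

/-- in two variables over an infinite field of any characteristic, every
artinian quotient has the Weak Lefschetz Property. -/
theorem stmt2 (k : Type*) [Field k] [Infinite k] (I : Ideal (MvPolynomial (Fin 2) k))
    (hhom : ∀ f ∈ I, ∀ n : ℕ, homogeneousComponent n f ∈ I)
    (hart : Module.Finite k (MvPolynomial (Fin 2) k ⧸ I)) :
    ∃ ℓ ∈ homogeneousSubmodule (Fin 2) k 1, ℓ ≠ 0 ∧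
      ∀ i : ℕ, mulInj I ℓ i ∨ mulSurj I ℓ i (i + 1) :=
  stmt2_general k I
end

section
/- Let k be a field of characteristic p > 0 and R = k[x_1,...,x_r] with r ≥ 3. Then the algebra R/(x_1^p,...,x_r^p) fails the Weak Lefschetz Property: for every linear form ℓ there exists a degree i such that ×ℓ : [R/I]_i → [R/I]_{i+1} is neither injective nor surjective. -/
open MvPolynomial

/-!
`R/(x_1^p, …, x_r^p)` is spanned by the reduced monomials `x^a` (all `a_j < p`), and the
coefficient of `x_1^{p-1} ⋯ x_r^{p-1}` is a perfect pairing between its degrees `d` and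
`r(p-1) - d`. In characteristic `p` every linear form satisfies `ℓ^p = 0` in `R/I`, so `ℓ`
kills the nonzero element `ℓ^{p-1}` (or `x_1^{p-1}` if `ℓ = 0`) of degree `p - 1`:
multiplication by `ℓ` from degree `p - 1` is not injective. Multiplying that element by a
suitable monomial gives a nonzero `u` of degree `r(p-1) - p ≥ p - 1` (here `r ≥ 3` is used)
with `ℓ u = 0`; every element of `ℓ · [R/I]_{p-1}` pairs to zero with `u`, while some monomial
of degree `p` does not, so multiplication by `ℓ` into degree `p` is not surjective either.
-/

namespace MvPolynomial

variable {σ R : Type*}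

section CommSemiring

variable [CommSemiring R] {p : ℕ}

theorem mem_span_X_pow_iff {f : MvPolynomial σ R} :
    f ∈ Ideal.span (Set.range fun i => (X i : MvPolynomial σ R) ^ p) ↔
      ∀ m ∈ f.support, ∃ i, p ≤ m i := by
  have hrange : (Set.range fun i => (X i : MvPolynomial σ R) ^ p) =
      (fun s => monomial s (1 : R)) '' Set.range fun i => Finsupp.single i p := by
    rw [← Set.range_comp]
    simp only [Function.comp_def, X_pow_eq_monomial]
  rw [hrange, mem_ideal_span_monomial_image]
  simp [Finsupp.single_le_iff]

theorem coeff_eq_zero_of_mem_span_X_pow {f : MvPolynomial σ R}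
    (hf : f ∈ Ideal.span (Set.range fun i => (X i : MvPolynomial σ R) ^ p))
    {m : σ →₀ ℕ} (hm : ∀ i, m i < p) : coeff m f = 0 := by
  by_contra hne
  obtain ⟨i, hi⟩ := mem_span_X_pow_iff.mp hf m (mem_support_iff.mpr hne)
  exact (hm i).not_ge hi

theorem IsHomogeneous.eq_zero_of_mem_span_X_pow {f : MvPolynomial σ R} {n : ℕ}
    (hf : f.IsHomogeneous n) (hn : n < p)
    (hI : f ∈ Ideal.span (Set.range fun i => (X i : MvPolynomial σ R) ^ p)) : f = 0 := by
  ext m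
  by_cases hm : m.degree = n
  · exact coeff_eq_zero_of_mem_span_X_pow hI fun i => (m.le_degree i).trans_lt (hm ▸ hn)
  · exact hf.coeff_eq_zero hm

end CommSemiring

theorem pow_char_mem_span_X_pow [CommRing R] (p : ℕ) [Fact p.Prime] [CharP R p]
    {f : MvPolynomial σ R} (hf : constantCoeff f = 0) :
    f ^ p ∈ Ideal.span (Set.range fun i => (X i : MvPolynomial σ R) ^ p) := by
  rw [f.as_sum, sum_pow_char]
  refine Ideal.sum_mem _ fun v hv => mem_span_X_pow_iff.mpr fun m hm => ?_
  rw [monomial_pow] at hm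
  obtain rfl := Finset.mem_singleton.mp (support_monomial_subset hm)
  have hv0 : v ≠ 0 := by
    rintro rfl
    exact mem_support_iff.mp hv (by rwa [← constantCoeff_eq])
  obtain ⟨i, hi⟩ := Finsupp.ne_iff.mp hv0
  exact ⟨i, by simpa using Nat.le_mul_of_pos_right p (Nat.pos_of_ne_zero hi)⟩

theorem exists_isHomogeneous_ne_zero_mul_mem_span_X_pow [CommRing R] [IsDomain R] [Nonempty σ]
    (p : ℕ) [Fact p.Prime] [CharP R p] {ℓ : MvPolynomial σ R} (hℓ : ℓ.IsHomogeneous 1) :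
    ∃ g : MvPolynomial σ R, g.IsHomogeneous (p - 1) ∧ g ≠ 0 ∧
      ℓ * g ∈ Ideal.span (Set.range fun i => (X i : MvPolynomial σ R) ^ p) := by
  have hp : p - 1 + 1 = p := Nat.sub_add_cancel (Fact.out : p.Prime).one_le
  by_cases hℓ0 : ℓ = 0
  · obtain ⟨i⟩ := ‹Nonempty σ›
    refine ⟨X i ^ (p - 1), by simpa using (isHomogeneous_X R i).pow (p - 1),
      pow_ne_zero _ (X_ne_zero i), by simp [hℓ0]⟩
  · refine ⟨ℓ ^ (p - 1), by simpa using hℓ.pow (p - 1), pow_ne_zero _ hℓ0, ?_⟩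
    rw [← pow_succ', hp]
    exact pow_char_mem_span_X_pow p (hℓ.coeff_eq_zero (by simp))

section Field

variable {k : Type*} [Field k] {p : ℕ}

theorem not_mulSurj_of_coeff_mul_ne_zero {ℓ u : MvPolynomial σ k}
    (hℓu : ℓ * u ∈ Ideal.span (Set.range fun i => (X i : MvPolynomial σ k) ^ p))
    {e b : σ →₀ ℕ} (hreduced : ∀ j, (e + b) j < p) (hb : coeff b u ≠ 0) {i : ℕ}
    (he : e.degree = i + 1) :
    ¬ mulSurj (Ideal.span (Set.range fun i => (X i : MvPolynomial σ k) ^ p)) ℓ i (i + 1) := by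
  intro hsurj
  obtain ⟨h, -, hh⟩ := hsurj (monomial e 1) (isHomogeneous_monomial 1 he)
  have hdiff := coeff_eq_zero_of_mem_span_X_pow (Ideal.mul_mem_right u _ hh) hreduced
  have hkilled := coeff_eq_zero_of_mem_span_X_pow (Ideal.mul_mem_left _ h hℓu) hreduced
  rw [show (monomial e 1 - ℓ * h) * u = monomial e 1 * u - h * (ℓ * u) by ring, coeff_sub,
    coeff_monomial_mul, one_mul, hkilled, sub_zero] at hdiff
  exact hb hdiff

theorem not_mulSurj_of_isHomogeneous_mul_mem [Fintype σ] {ℓ g : MvPolynomial σ k} {d i : ℕ}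
    (hg : g.IsHomogeneous d)
    (hgI : g ∉ Ideal.span (Set.range fun i => (X i : MvPolynomial σ k) ^ p))
    (hℓg : ℓ * g ∈ Ideal.span (Set.range fun i => (X i : MvPolynomial σ k) ^ p))
    (hdi : d + (i + 1) ≤ Fintype.card σ * (p - 1)) :
    ¬ mulSurj (Ideal.span (Set.range fun i => (X i : MvPolynomial σ k) ^ p)) ℓ i (i + 1) := by
  obtain ⟨a, ha, hared⟩ : ∃ a ∈ g.support, ∀ j, a j < p := by
    simpa [mem_span_X_pow_iff] using hgI
  set top : σ →₀ ℕ := Finsupp.equivFunOnFinite.symm fun _ => p - 1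
  have hatop : a ≤ top := fun j => Nat.le_sub_one_of_lt (hared j)
  have hdeg : (top - a).degree + d = Fintype.card σ * (p - 1) := by
    have had : a.degree = d := (hg.degree_eq_sum_deg_support ha).symm
    rw [← had, ← map_add, tsub_add_cancel_of_le hatop, Finsupp.degree_eq_sum]
    simp [top]
  obtain ⟨e, he, hedeg⟩ := Finsupp.exists_le_degree_eq (top - a) (i + 1) (by omega)
  have htop : e + (a + (top - a - e)) = top := by
    rw [add_left_comm, add_tsub_cancel_of_le he, add_tsub_cancel_of_le hatop]
  refine not_mulSurj_of_coeff_mul_ne_zero (u := g * monomial (top - a - e) 1)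
    (by rw [← mul_assoc]; exact Ideal.mul_mem_right _ _ hℓg) (b := a + (top - a - e))
    (fun j => ?_) ?_ hedeg
  · rw [htop]
    exact Nat.sub_lt (Nat.zero_lt_of_lt (hared j)) one_pos
  · rwa [coeff_mul_monomial, mul_one, ← mem_support_iff]

end Field

end MvPolynomial

/-- in characteristic `p > 0` and `r ≥ 3` variables, `R/(x_1^p,...,x_r^p)`
fails the WLP: every linear form fails to have maximal rank in some degree. -/
theorem stmt3 (k : Type*) [Field k] (p : ℕ) (hp : p.Prime) [CharP k p]
    (r : ℕ) (hr : 3 ≤ r) (I : Ideal (MvPolynomial (Fin r) k))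
    (hI : I = Ideal.span (Set.range fun i => (X i : MvPolynomial (Fin r) k) ^ p)) :
    ∀ ℓ ∈ homogeneousSubmodule (Fin r) k 1, ∃ i : ℕ,
      ¬ mulInj I ℓ i ∧ ¬ mulSurj I ℓ i (i + 1) := by
  intro ℓ hℓ
  subst hI
  have : Fact p.Prime := ⟨hp⟩
  have : Nonempty (Fin r) := ⟨⟨0, by omega⟩⟩
  obtain ⟨g, hg, hg0, hℓg⟩ :=
    exists_isHomogeneous_ne_zero_mul_mem_span_X_pow p ((mem_homogeneousSubmodule _ _).mp hℓ)
  have hgI := mt (hg.eq_zero_of_mem_span_X_pow (Nat.sub_one_lt hp.ne_zero)) hg0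
  have hdeg : 3 * (p - 1) ≤ r * (p - 1) := Nat.mul_le_mul_right _ hr
  have := hp.two_le
  refine ⟨p - 1, fun hinj => hgI (hinj g hg hℓg), ?_⟩
  exact not_mulSurj_of_isHomogeneous_mul_mem hg hgI hℓg (by rw [Fintype.card_fin]; omega)
end

section
/- Let k be a field of characteristic p > 0 and R = k[x,y]. The algebra R/(x^p, y^p) has the Weak Lefschetz Property. -/
/-!
The linear form `x` is a Lefschetz element. In degrees `i` with `i + 1 < p` no monomial of
degree `i + 1` is divisible by `x^p` or `y^p`, so `x * g ∈ I` forces `x * g = 0`. In degrees with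
`p ≤ i + 1`, a binary form `g` of degree `i + 1` splits as `x * (g / x) + c * y^(i+1)`, with `c`
its `y^(i+1)`-coefficient, and `y^(i+1) ∈ I`.
-/

open MvPolynomial

namespace MvPolynomial

variable {σ R : Type*} [CommSemiring R]

theorem IsHomogeneous.degree_eq_of_coeff_ne_zero {φ : MvPolynomial σ R} {n : ℕ}
    (hφ : φ.IsHomogeneous n) {d : σ →₀ ℕ} (hd : coeff d φ ≠ 0) : d.degree = n := by
  simpa [Finsupp.degree_eq_weight_one, Pi.one_def] using hφ hd

theorem mem_ideal_span_X_pow_image {φ : MvPolynomial σ R} {p : ℕ} {s : Set σ} :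
    φ ∈ Ideal.span ((fun i => X i ^ p) '' s) ↔ ∀ d ∈ φ.support, ∃ i ∈ s, p ≤ d i := by
  have hX : (fun i => (X i ^ p : MvPolynomial σ R)) =
      (fun d => monomial d 1) ∘ fun i => Finsupp.single i p := by
    ext1 i; exact X_pow_eq_monomial
  simp [hX, Set.image_comp, mem_ideal_span_monomial_image, Finsupp.single_le_iff]

theorem eq_zero_of_isHomogeneous_of_mem_span_X_pow {φ : MvPolynomial σ R} {n p : ℕ} {s : Set σ}
    (hφ : φ.IsHomogeneous n) (hn : n < p) (hmem : φ ∈ Ideal.span ((fun i => X i ^ p) '' s)) :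
    φ = 0 := by
  rw [← support_eq_empty, Finset.eq_empty_iff_forall_notMem]
  intro d hd
  obtain ⟨i, -, hpi⟩ := mem_ideal_span_X_pow_image.mp hmem d hd
  have := hpi.trans (Finsupp.le_degree i d)
  rw [hφ.degree_eq_of_coeff_ne_zero (mem_support_iff.mp hd)] at this
  omega

theorem IsHomogeneous.divMonomial {φ : MvPolynomial σ R} {n : ℕ} (hφ : φ.IsHomogeneous n)
    (s : σ →₀ ℕ) : (φ.divMonomial s).IsHomogeneous (n - s.degree) := by
  intro d hd
  rw [coeff_divMonomial] at hd
  have := hφ.degree_eq_of_coeff_ne_zero hd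
  rw [map_add] at this
  simp only [Pi.one_def, ← Finsupp.degree_eq_weight_one]
  omega

theorem modMonomial_single_zero_eq_monomial {φ : MvPolynomial (Fin 2) R} {n : ℕ}
    (hφ : φ.IsHomogeneous n) :
    φ.modMonomial (Finsupp.single 0 1) =
      monomial (Finsupp.single 1 n) (coeff (Finsupp.single 1 n) φ) := by
  ext d
  rw [coeff_monomial]
  by_cases hd : Finsupp.single 0 1 ≤ d
  · rw [coeff_modMonomial_of_le _ hd, if_neg]
    rintro rfl
    simpa using Finsupp.single_le_iff.mp hd
  · rw [coeff_modMonomial_of_not_le _ hd]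
    have hd0 : d 0 = 0 := by simpa [Finsupp.single_le_iff] using hd
    split_ifs with h
    · rw [h]
    · by_contra hc
      have := hφ.degree_eq_of_coeff_ne_zero hc
      rw [Finsupp.degree_eq_sum, Fin.sum_univ_two, hd0, zero_add] at this
      apply h
      ext j; fin_cases j <;> simp [hd0, this]

end MvPolynomial

section

variable {k : Type*} [Field k]

theorem mulInj_X_of_add_one_lt {σ : Type*} {s : Set σ} {p i : ℕ} (a : σ) (hi : i + 1 < p) :
    mulInj (Ideal.span ((fun j => (X j : MvPolynomial σ k) ^ p) '' s)) (X a) i := by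
  intro g hg hXg
  have hXg0 : X a * g = 0 :=
    eq_zero_of_isHomogeneous_of_mem_span_X_pow ((isHomogeneous_X k a).mul hg) (by omega) hXg
  rw [(mul_eq_zero.mp hXg0).resolve_left (X_ne_zero a)]
  exact zero_mem _

theorem mulSurj_X_zero_of_le_add_one {I : Ideal (MvPolynomial (Fin 2) k)} {p i : ℕ}
    (hI : X 1 ^ p ∈ I) (hi : p ≤ i + 1) : mulSurj I (X 0) i (i + 1) := by
  intro g hg
  refine ⟨g.divMonomial (Finsupp.single 0 1), by simpa using hg.divMonomial (Finsupp.single 0 1), ?_⟩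
  rw [sub_eq_of_eq_add' (divMonomial_add_modMonomial_single g 0).symm,
    modMonomial_single_zero_eq_monomial hg, ← C_mul_X_pow_eq_monomial, ← Nat.sub_add_cancel hi,
    pow_add]
  exact I.mul_mem_left _ (I.mul_mem_left _ hI)

end

theorem stmt4_general (k : Type*) [Field k] (p : ℕ)
    (I : Ideal (MvPolynomial (Fin 2) k))
    (hI : I = Ideal.span {(X 0 : MvPolynomial (Fin 2) k) ^ p, (X 1 : MvPolynomial (Fin 2) k) ^ p}) :
    ∃ ℓ ∈ homogeneousSubmodule (Fin 2) k 1, ℓ ≠ 0 ∧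
      ∀ i : ℕ, mulInj I ℓ i ∨ mulSurj I ℓ i (i + 1) := by
  refine ⟨X 0, isHomogeneous_X k 0, X_ne_zero 0, fun i => ?_⟩
  rcases lt_or_ge (i + 1) p with hlt | hge
  · rw [hI, ← Set.image_pair (fun j => X j ^ p)]
    exact Or.inl (mulInj_X_of_add_one_lt 0 hlt)
  · exact Or.inr (mulSurj_X_zero_of_le_add_one (hI ▸ Ideal.subset_span (by simp)) hge)

/-- in characteristic `p > 0` and two variables, `R/(x^p, y^p)` has the WLP. -/
theorem stmt4 (k : Type*) [Field k] (p : ℕ) (hp : p.Prime) [CharP k p]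
    (I : Ideal (MvPolynomial (Fin 2) k))
    (hI : I = Ideal.span {(X 0 : MvPolynomial (Fin 2) k) ^ p, (X 1 : MvPolynomial (Fin 2) k) ^ p}) :
    ∃ ℓ ∈ homogeneousSubmodule (Fin 2) k 1, ℓ ≠ 0 ∧
      ∀ i : ℕ, mulInj I ℓ i ∨ mulSurj I ℓ i (i + 1) :=
  stmt4_general k p I hI
end

section
/- Let k have characteristic zero and R = k[x,y,z]. The algebra R/(x^3, y^3, z^3, xyz), which is a level artinian monomial almost complete intersection with h-vector (1,3,6,6,3), fails the Weak Lefschetz Property: for every linear form ℓ, the map ×ℓ : [R/I]_2 → [R/I]_3 is not bijective (hence not of maximal rank since both spaces are 6-dimensional). -/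
open MvPolynomial

/-!
Write `ℓ = ax + by + cz`. The identity
`u³ + v³ + w³ - 3uvw = (u + v + w)(u² + v² + w² - uv - uw - vw)` at `u = ax, v = by, w = cz`
shows that `ℓ` kills the class of the quadric `g = (ax)² + (by)² + (cz)² - ab·xy - ac·xz - bc·yz`,
since every monomial of `ℓg` lies in `I`. No minimal generator of the monomial ideal `I` divides
`x²`, `y²` or `z²`, so `g ∈ I` forces `a² = b² = c² = 0`; and for `ℓ = 0` injectivity fails at `x²`.
-/

namespace MvPolynomial

variable {σ R : Type*} [CommSemiring R]

theorem coeff_eq_zero_of_mem_span_monomial_image {p : MvPolynomial σ R} {s : Set (σ →₀ ℕ)}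
    (hp : p ∈ Ideal.span ((fun s => monomial s (1 : R)) '' s)) {m : σ →₀ ℕ}
    (hm : ∀ t ∈ s, ¬ t ≤ m) : p.coeff m = 0 := by
  by_contra h
  obtain ⟨t, ht, htm⟩ := mem_ideal_span_monomial_image.mp hp m (mem_support_iff.mpr h)
  exact hm t ht htm

theorem exists_eq_sum_smul_X_of_mem_homogeneousSubmodule_one [Fintype σ] {ℓ : MvPolynomial σ R}
    (hℓ : ℓ ∈ homogeneousSubmodule σ R 1) : ∃ a : σ → R, ℓ = ∑ i, a i • X i := by
  rw [homogeneousSubmodule_one_eq_span_X, Submodule.mem_span_range_iff_exists_fun] at hℓ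
  exact hℓ.imp fun _ h => h.symm

end MvPolynomial

section CubesAndXYZ

variable {k : Type*} [Field k]

variable (k) in
noncomputable def cubesXYZIdeal : Ideal (MvPolynomial (Fin 3) k) :=
  Ideal.span {(X 0 : MvPolynomial (Fin 3) k) ^ 3, (X 1 : MvPolynomial (Fin 3) k) ^ 3,
    (X 2 : MvPolynomial (Fin 3) k) ^ 3, X 0 * X 1 * X 2}

theorem cubesXYZIdeal_eq_span_monomial_image :
    cubesXYZIdeal k = Ideal.span ((fun s => monomial s (1 : k)) '' {Finsupp.single 0 3,
      Finsupp.single 1 3, Finsupp.single 2 3,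
      Finsupp.single 0 1 + Finsupp.single 1 1 + Finsupp.single 2 1}) := by
  simp only [cubesXYZIdeal, Set.image_insert_eq, Set.image_singleton, X, monomial_mul,
    monomial_pow, one_pow, mul_one, Finsupp.smul_single, smul_eq_mul]

theorem coeff_single_two_eq_zero_of_mem_cubesXYZIdeal {p : MvPolynomial (Fin 3) k}
    (hp : p ∈ cubesXYZIdeal k) (i : Fin 3) : p.coeff (Finsupp.single i 2) = 0 := by
  rw [cubesXYZIdeal_eq_span_monomial_image] at hp
  refine coeff_eq_zero_of_mem_span_monomial_image hp ?_
  fin_cases i <;> rintro t (rfl | rfl | rfl | rfl) h <;>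
    simp [Finsupp.le_def, Fin.forall_fin_succ, Finsupp.single_apply] at h

theorem X_sq_notMem_cubesXYZIdeal (i : Fin 3) :
    (X i : MvPolynomial (Fin 3) k) ^ 2 ∉ cubesXYZIdeal k := by
  intro h
  simpa [coeff_X_pow] using coeff_single_two_eq_zero_of_mem_cubesXYZIdeal h i

noncomputable def cubeCofactor (a : Fin 3 → k) : MvPolynomial (Fin 3) k :=
  let u (i : Fin 3) := C (a i) * X i
  u 0 ^ 2 + u 1 ^ 2 + u 2 ^ 2 - u 0 * u 1 - u 0 * u 2 - u 1 * u 2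

theorem cubeCofactor_mem_homogeneousSubmodule (a : Fin 3 → k) :
    cubeCofactor a ∈ homogeneousSubmodule (Fin 3) k 2 := by
  have h (i : Fin 3) := isHomogeneous_C_mul_X (a i) i
  exact ((((((h 0).pow 2).add ((h 1).pow 2)).add ((h 2).pow 2)).sub ((h 0).mul (h 1))).sub
    ((h 0).mul (h 2))).sub ((h 1).mul (h 2))

theorem coeff_single_two_cubeCofactor (a : Fin 3 → k) (i : Fin 3) :
    (cubeCofactor a).coeff (Finsupp.single i 2) = a i ^ 2 := by
  simp only [cubeCofactor]
  simp only [mul_pow, ← map_pow, mul_mul_mul_comm _ (X _), ← map_mul, coeff_add, coeff_sub,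
    coeff_C_mul]
  fin_cases i <;> simp [coeff_X_pow, coeff_X_mul', coeff_X, Finsupp.single_eq_single_iff,
    ← Finsupp.single_tsub]

theorem sum_smul_X_mul_cubeCofactor_mem (a : Fin 3 → k) :
    (∑ i, a i • X i) * cubeCofactor a ∈ cubesXYZIdeal k := by
  have hX (i : Fin 3) : (X i : MvPolynomial (Fin 3) k) ^ 3 ∈ cubesXYZIdeal k :=
    Ideal.subset_span (by fin_cases i <;> simp)
  have hXYZ : (X 0 * X 1 * X 2 : MvPolynomial (Fin 3) k) ∈ cubesXYZIdeal k :=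
    Ideal.subset_span (by simp)
  have key : (∑ i, a i • X i) * cubeCofactor a = C (a 0 ^ 3) * X 0 ^ 3 + C (a 1 ^ 3) * X 1 ^ 3
      + C (a 2 ^ 3) * X 2 ^ 3 - C (3 * a 0 * a 1 * a 2) * (X 0 * X 1 * X 2) := by
    simp only [Fin.sum_univ_three, cubeCofactor, smul_eq_C_mul, map_mul, map_pow, map_ofNat]
    ring
  rw [key]
  exact sub_mem (add_mem (add_mem (Ideal.mul_mem_left _ _ (hX 0)) (Ideal.mul_mem_left _ _ (hX 1)))
    (Ideal.mul_mem_left _ _ (hX 2))) (Ideal.mul_mem_left _ _ hXYZ)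

end CubesAndXYZ

theorem stmt8_general (k : Type*) [Field k] (I : Ideal (MvPolynomial (Fin 3) k))
    (hI : I = Ideal.span {(X 0 : MvPolynomial (Fin 3) k) ^ 3, (X 1 : MvPolynomial (Fin 3) k) ^ 3,
      (X 2 : MvPolynomial (Fin 3) k) ^ 3, X 0 * X 1 * X 2}) :
    ∀ ℓ ∈ homogeneousSubmodule (Fin 3) k 1, ¬ (mulInj I ℓ 2 ∧ mulSurj I ℓ 2 3) := by
  change I = cubesXYZIdeal k at hI
  subst hI
  rintro ℓ hℓ ⟨hinj, -⟩
  obtain ⟨a, rfl⟩ := exists_eq_sum_smul_X_of_mem_homogeneousSubmodule_one hℓ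
  have ha : a = 0 := by
    funext i
    have hg := hinj _ (cubeCofactor_mem_homogeneousSubmodule a) (sum_smul_X_mul_cubeCofactor_mem a)
    simpa [coeff_single_two_cubeCofactor] using coeff_single_two_eq_zero_of_mem_cubesXYZIdeal hg i
  subst ha
  refine X_sq_notMem_cubesXYZIdeal 0 (hinj _ ((isHomogeneous_X k 0).pow 2) ?_)
  simp

/-- Brenner–Kaid: `k[x,y,z]/(x^3,y^3,z^3,xyz)` (char 0) fails the WLP:
for every linear form `ℓ`, the map `×ℓ : [R/I]_2 → [R/I]_3` is not bijective. -/
theorem stmt8 (k : Type*) [Field k] [CharZero k] (I : Ideal (MvPolynomial (Fin 3) k))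
    (hI : I = Ideal.span {(X 0 : MvPolynomial (Fin 3) k) ^ 3, (X 1 : MvPolynomial (Fin 3) k) ^ 3,
      (X 2 : MvPolynomial (Fin 3) k) ^ 3, X 0 * X 1 * X 2}) :
    ∀ ℓ ∈ homogeneousSubmodule (Fin 3) k 1, ¬ (mulInj I ℓ 2 ∧ mulSurj I ℓ 2 3) :=
  stmt8_general k I hI
end

section
/- Let I ⊆ R = ℚ[x_1,...,x_r] be a monomial ideal with R/I artinian. If R/I has the Weak Lefschetz Property over ℚ (equivalently, over any field of characteristic 0), then R/I (i.e., the algebra defined by the same monomial generators) has the WLP over any field whose characteristic is sufficiently large. -/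
open MvPolynomial

universe u

/-!
Modulo a monomial ideal, the standard monomials (those outside the ideal) give a basis of the
quotient; it is finite since the quotient is artinian. In these bases, multiplication by a form
with integer coefficients is an integer matrix `M`, the same over every field, and clearing
denominators turns a rational Lefschetz element into such a form. If `M` has maximal rank over
`ℚ`, then `det (Mᵀ * M)` or `det (M * Mᵀ)` is a nonzero integer, and `M` keeps maximal rank over
every field in which that integer does not vanish. Only the finitely many degrees carrying
standard monomials impose a condition, so one bound on the characteristic serves all of them.
-/

open MvPolynomial Matrix

namespace Matrix

variable {m n : Type*} [Fintype m] [Fintype n]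

theorem det_transpose_mul_self_ne_zero [DecidableEq n] {K : Type*} [Field K] [LinearOrder K]
    [IsStrictOrderedRing K] {M : Matrix m n K} (h : ∀ v, M *ᵥ v = 0 → v = 0) :
    (Mᵀ * M).det ≠ 0 := by
  rw [Ne, ← exists_mulVec_eq_zero_iff]
  rintro ⟨v, hv0, hv⟩
  have hker : v ∈ LinearMap.ker (Mᵀ * M).mulVecLin := hv
  rw [ker_mulVecLin_transpose_mul_self] at hker
  exact hv0 (h v hker)

theorem eq_zero_of_transpose_mulVec_eq_zero {K : Type*} [Field K] {M : Matrix m n K}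
    (h : Function.Surjective M.mulVec) (u : m → K) (hu : Mᵀ *ᵥ u = 0) : u = 0 := by
  refine dotProduct_eq_zero_iff.mp fun w => ?_
  obtain ⟨v, rfl⟩ := h w
  rw [dotProduct_mulVec, ← mulVec_transpose, hu, zero_dotProduct]

theorem eq_zero_of_mulVec_eq_zero_of_det_ne_zero [DecidableEq n] {K : Type*} [Field K]
    {M : Matrix m n K} (h : (Mᵀ * M).det ≠ 0) (v : n → K) (hv : M *ᵥ v = 0) : v = 0 := by
  by_contra hv0
  exact h (exists_mulVec_eq_zero_iff.mp ⟨v, hv0, by rw [← mulVec_mulVec, hv, mulVec_zero]⟩)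

theorem mulVec_surjective_of_det_ne_zero [DecidableEq m] {K : Type*} [Field K]
    {M : Matrix m n K} (h : (M * Mᵀ).det ≠ 0) : Function.Surjective M.mulVec := fun u =>
  ⟨Mᵀ *ᵥ (M * Mᵀ)⁻¹ *ᵥ u, by
    rw [mulVec_mulVec, mulVec_mulVec, mul_nonsing_inv _ h.isUnit, one_mulVec]⟩

theorem intCast_det_mul [DecidableEq m] (A : Matrix m n ℤ) (B : Matrix n m ℤ) (K : Type*)
    [CommRing K] :
    (((A * B).det : ℤ) : K) = (A.map (Int.castRingHom K) * B.map (Int.castRingHom K)).det := by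
  rw [← Matrix.map_mul, ← RingHom.mapMatrix_apply, ← RingHom.map_det, eq_intCast]

theorem exists_forall_eq_zero_of_mulVec_eq_zero_of_rat [DecidableEq n] {M : Matrix m n ℤ}
    (h : ∀ v, M.map (Int.castRingHom ℚ) *ᵥ v = 0 → v = 0) :
    ∃ d : ℤ, d ≠ 0 ∧ ∀ (K : Type*) [Field K], (d : K) ≠ 0 →
      ∀ v, M.map (Int.castRingHom K) *ᵥ v = 0 → v = 0 := by
  have hℚ := det_transpose_mul_self_ne_zero h
  rw [← transpose_map, ← intCast_det_mul, Int.cast_ne_zero] at hℚ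
  refine ⟨_, hℚ, fun K _ hK => eq_zero_of_mulVec_eq_zero_of_det_ne_zero ?_⟩
  rwa [← transpose_map, ← intCast_det_mul]

theorem exists_forall_mulVec_surjective_of_rat [DecidableEq m] {M : Matrix m n ℤ}
    (h : Function.Surjective (M.map (Int.castRingHom ℚ)).mulVec) :
    ∃ d : ℤ, d ≠ 0 ∧ ∀ (K : Type*) [Field K], (d : K) ≠ 0 →
      Function.Surjective (M.map (Int.castRingHom K)).mulVec := by
  have hℚ := det_transpose_mul_self_ne_zero (eq_zero_of_transpose_mulVec_eq_zero h)
  rw [transpose_transpose, ← transpose_map, ← intCast_det_mul, Int.cast_ne_zero] at hℚ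
  refine ⟨_, hℚ, fun K _ hK => mulVec_surjective_of_det_ne_zero ?_⟩
  rwa [← transpose_map, ← intCast_det_mul]

end Matrix

variable {σ : Type*}

noncomputable abbrev monomialIdeal (R : Type*) [CommSemiring R] (S : Set (σ →₀ ℕ)) :
    Ideal (MvPolynomial σ R) :=
  Ideal.span ((fun s => monomial s (1 : R)) '' S)

theorem mem_monomialIdeal_iff {R : Type*} [CommSemiring R] {S : Set (σ →₀ ℕ)}
    {g : MvPolynomial σ R} : g ∈ monomialIdeal R S ↔ ∀ a ∉ upperClosure S, coeff a g = 0 := by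
  rw [mem_ideal_span_monomial_image]
  refine forall_congr' fun a => ?_
  rw [mem_support_iff, mem_upperClosure, not_imp_comm]

theorem finite_setOf_notMem_upperClosure {K : Type*} [Field K] {S : Set (σ →₀ ℕ)}
    [Module.Finite K (MvPolynomial σ K ⧸ monomialIdeal K S)] :
    {a | a ∉ upperClosure S}.Finite := by
  set s := {a | a ∉ upperClosure S}
  have hinj : Function.Injective ((Ideal.Quotient.mkₐ K (monomialIdeal K S)).toLinearMap ∘ₗ
      (restrictSupport K s).subtype) := by
    rw [← LinearMap.ker_eq_bot, eq_bot_iff]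
    rintro ⟨g, hg⟩ hker
    have hgI : g ∈ monomialIdeal K S := Ideal.Quotient.eq_zero_iff_mem.mp hker
    ext a
    by_cases ha : a ∈ s
    · exact mem_monomialIdeal_iff.mp hgI a ha
    · exact notMem_support_iff.mp fun h => ha (hg h)
  have := Module.Finite.of_injective _ hinj
  exact Set.finite_coe_iff.mp (Module.Finite.finite_basis (basisRestrictSupport K s))

section Coordinates

variable {R : Type*} [CommSemiring R]

noncomputable def Finset.ofDegree (T : Finset (σ →₀ ℕ)) (i : ℕ) : Finset (σ →₀ ℕ) :=
  {a ∈ T | a.degree = i}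

noncomputable def sumMonomials (A : Finset (σ →₀ ℕ)) (v : A → R) : MvPolynomial σ R :=
  ∑ a : A, monomial (a : σ →₀ ℕ) (v a)

theorem coeff_sumMonomials {A : Finset (σ →₀ ℕ)} (v : A → R) (a : A) :
    coeff a (sumMonomials A v) = v a := by
  classical
  simp only [sumMonomials, coeff_sum, coeff_monomial, Subtype.coe_inj, Finset.sum_ite_eq',
    Finset.mem_univ, if_true]

theorem isHomogeneous_sumMonomials (T : Finset (σ →₀ ℕ)) {i : ℕ} (v : T.ofDegree i → R) :
    (sumMonomials (T.ofDegree i) v).IsHomogeneous i :=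
  IsHomogeneous.sum _ _ _ fun a _ => isHomogeneous_monomial _ (Finset.mem_filter.mp a.2).2

noncomputable def mulMatrix (f : MvPolynomial σ R) (A B : Finset (σ →₀ ℕ)) : Matrix B A R :=
  of fun b a => if (a : σ →₀ ℕ) ≤ b then coeff (↑b - ↑a) f else 0

theorem mulMatrix_map {S : Type*} [CommSemiring S] (φ : R →+* S) (f : MvPolynomial σ R)
    (A B : Finset (σ →₀ ℕ)) : (mulMatrix f A B).map φ = mulMatrix (map φ f) A B := by
  ext b a
  simp only [mulMatrix, map_apply, of_apply, apply_ite φ, coeff_map, map_zero]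

theorem mulMatrix_mulVec (f : MvPolynomial σ R) {A B : Finset (σ →₀ ℕ)} (v : A → R) (b : B) :
    (mulMatrix f A B *ᵥ v) b = coeff b (f * sumMonomials A v) := by
  simp only [mulVec, dotProduct, mulMatrix, of_apply, sumMonomials, Finset.mul_sum, coeff_sum,
    coeff_mul_monomial', ite_mul, zero_mul]

end Coordinates

section StandardMonomials

variable {K : Type*} [Field K] {S : Set (σ →₀ ℕ)} {T : Finset (σ →₀ ℕ)}
  (hT : ∀ a, a ∈ T ↔ a ∉ upperClosure S)
include hT

theorem MvPolynomial.IsHomogeneous.mem_monomialIdeal_iff {g : MvPolynomial σ K} {i : ℕ}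
    (hg : g.IsHomogeneous i) :
    g ∈ monomialIdeal K S ↔ ∀ a : T.ofDegree i, coeff a g = 0 := by
  rw [_root_.mem_monomialIdeal_iff]
  refine ⟨fun h a => h a ((hT a).mp (Finset.mem_filter.mp a.2).1), fun h a ha => ?_⟩
  by_cases hdeg : a.degree = i
  · exact h ⟨a, Finset.mem_filter.mpr ⟨(hT a).mpr ha, hdeg⟩⟩
  · exact hg.coeff_eq_zero hdeg

theorem sub_sumMonomials_coeff_mem {g : MvPolynomial σ K} {i : ℕ} (hg : g.IsHomogeneous i) :
    g - sumMonomials (T.ofDegree i) (fun a => coeff a g) ∈ monomialIdeal K S := by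
  rw [(hg.sub (isHomogeneous_sumMonomials T _)).mem_monomialIdeal_iff hT]
  intro a
  rw [coeff_sub, coeff_sumMonomials, sub_self]

theorem coeff_mul_eq_mulMatrix_mulVec (f : MvPolynomial σ K) {g : MvPolynomial σ K} {i : ℕ}
    (hg : g.IsHomogeneous i) {j : ℕ} (b : T.ofDegree j) :
    coeff b (f * g) = (mulMatrix f (T.ofDegree i) (T.ofDegree j) *ᵥ fun a => coeff a g) b := by
  have hstd : coeff b (f * (g - sumMonomials (T.ofDegree i) (fun a => coeff a g))) = 0 :=
    _root_.mem_monomialIdeal_iff.mp (Ideal.mul_mem_left _ f (sub_sumMonomials_coeff_mem hT hg))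
      b ((hT b).mp (Finset.mem_filter.mp b.2).1)
  rw [mulMatrix_mulVec, ← sub_eq_zero, ← coeff_sub, ← mul_sub, hstd]

theorem mulInj_iff_mulMatrix {f : MvPolynomial σ K} {e : ℕ} (hf : f.IsHomogeneous e) (i : ℕ) :
    mulInj (monomialIdeal K S) f i ↔
      ∀ v, mulMatrix f (T.ofDegree i) (T.ofDegree (i + e)) *ᵥ v = 0 → v = 0 := by
  have hmul {g : MvPolynomial σ K} (hg : g.IsHomogeneous i) : (f * g).IsHomogeneous (i + e) :=
    add_comm e i ▸ hf.mul hg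
  constructor
  · intro h v hv
    have hg := isHomogeneous_sumMonomials T v
    have hfg : f * sumMonomials _ v ∈ monomialIdeal K S :=
      ((hmul hg).mem_monomialIdeal_iff hT).mpr fun b => by
        rw [← mulMatrix_mulVec, hv, Pi.zero_apply]
    have hg0 := (hg.mem_monomialIdeal_iff hT).mp (h _ ((mem_homogeneousSubmodule _ _).mpr hg) hfg)
    exact funext fun a => (coeff_sumMonomials v a).symm.trans (hg0 a)
  · intro h g hg hfg
    rw [mem_homogeneousSubmodule] at hg
    refine (hg.mem_monomialIdeal_iff hT).mpr (congrFun (h _ (funext fun b => ?_)))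
    rw [← coeff_mul_eq_mulMatrix_mulVec hT f hg b]
    exact ((hmul hg).mem_monomialIdeal_iff hT).mp hfg b

theorem mulSurj_iff_mulMatrix {f : MvPolynomial σ K} {e : ℕ} (hf : f.IsHomogeneous e) (i : ℕ) :
    mulSurj (monomialIdeal K S) f i (i + e) ↔
      Function.Surjective (mulMatrix f (T.ofDegree i) (T.ofDegree (i + e))).mulVec := by
  have hmul {g : MvPolynomial σ K} (hg : g.IsHomogeneous i) : (f * g).IsHomogeneous (i + e) :=
    add_comm e i ▸ hf.mul hg
  constructor
  · intro h u
    have hg := isHomogeneous_sumMonomials T u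
    obtain ⟨g', hg', hsub⟩ := h _ ((mem_homogeneousSubmodule _ _).mpr hg)
    rw [mem_homogeneousSubmodule] at hg'
    have hsub0 := ((hg.sub (hmul hg')).mem_monomialIdeal_iff hT).mp hsub
    refine ⟨fun a => coeff a g', funext fun b => ?_⟩
    rw [← coeff_mul_eq_mulMatrix_mulVec hT f hg' b, ← coeff_sumMonomials u b, eq_comm,
      ← sub_eq_zero, ← coeff_sub, hsub0]
  · intro h g hg
    rw [mem_homogeneousSubmodule] at hg
    obtain ⟨v, hv⟩ := h fun b => coeff b g
    have hg' := isHomogeneous_sumMonomials T v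
    refine ⟨_, (mem_homogeneousSubmodule _ _).mpr hg',
      ((hg.sub (hmul hg')).mem_monomialIdeal_iff hT).mpr fun b => ?_⟩
    rw [coeff_sub, ← mulMatrix_mulVec, hv, sub_self]

theorem mulSurj_of_forall_degree_lt (f : MvPolynomial σ K) (i : ℕ) {j : ℕ}
    (hj : ∀ a ∈ T, a.degree < j) : mulSurj (monomialIdeal K S) f i j := by
  intro g hg
  refine ⟨0, zero_mem _, ?_⟩
  rw [mul_zero, sub_zero, ((mem_homogeneousSubmodule _ _).mp hg).mem_monomialIdeal_iff hT]
  intro a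
  have ha := Finset.mem_filter.mp a.2
  exact absurd ha.2 (hj a ha.1).ne

end StandardMonomials

theorem exists_forall_mulInj_or_mulSurj_of_rat {S : Set (σ →₀ ℕ)} {T : Finset (σ →₀ ℕ)}
    (hT : ∀ a, a ∈ T ↔ a ∉ upperClosure S) {f : MvPolynomial σ ℤ} {e : ℕ}
    (hf : f.IsHomogeneous e) (i : ℕ)
    (h : mulInj (monomialIdeal ℚ S) (map (Int.castRingHom ℚ) f) i ∨
      mulSurj (monomialIdeal ℚ S) (map (Int.castRingHom ℚ) f) i (i + e)) :
    ∃ d : ℤ, d ≠ 0 ∧ ∀ (K : Type*) [Field K], (d : K) ≠ 0 →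
      mulInj (monomialIdeal K S) (map (Int.castRingHom K) f) i ∨
      mulSurj (monomialIdeal K S) (map (Int.castRingHom K) f) i (i + e) := by
  classical
  rw [mulInj_iff_mulMatrix hT (hf.map _), mulSurj_iff_mulMatrix hT (hf.map _),
    ← mulMatrix_map] at h
  rcases h with h | h
  · obtain ⟨d, hd, hK⟩ := exists_forall_eq_zero_of_mulVec_eq_zero_of_rat h
    refine ⟨d, hd, fun K _ hdK => Or.inl ?_⟩
    rw [mulInj_iff_mulMatrix hT (hf.map _), ← mulMatrix_map]
    exact hK K hdK
  · obtain ⟨d, hd, hK⟩ := exists_forall_mulVec_surjective_of_rat h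
    refine ⟨d, hd, fun K _ hdK => Or.inr ?_⟩
    rw [mulSurj_iff_mulMatrix hT (hf.map _), ← mulMatrix_map]
    exact hK K hdK

section Rescale

variable {K : Type*} [Field K] {I : Ideal (MvPolynomial σ K)} {ℓ : MvPolynomial σ K} {d : K}

theorem mulInj.C_mul {i : ℕ} (h : mulInj I ℓ i) (hd : d ≠ 0) : mulInj I (C d * ℓ) i :=
  fun g hg hdg => h g hg <|
    (Ideal.unit_mul_mem_iff_mem I ((isUnit_iff_ne_zero.mpr hd).map C)).mp (mul_assoc _ ℓ g ▸ hdg)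

theorem mulSurj.C_mul {i j : ℕ} (h : mulSurj I ℓ i j) (hd : d ≠ 0) : mulSurj I (C d * ℓ) i j := by
  intro g hg
  obtain ⟨h', hh', hsub⟩ := h g hg
  refine ⟨C d⁻¹ * h', by simpa [← smul_eq_C_mul] using Submodule.smul_mem _ d⁻¹ hh', ?_⟩
  rwa [mul_mul_mul_comm, ← MvPolynomial.C_mul, mul_inv_cancel₀ hd, C_1, one_mul]

end Rescale

theorem MvPolynomial.exists_map_intCast_eq_C_mul (φ : MvPolynomial σ ℚ) :
    ∃ (f : MvPolynomial σ ℤ) (d : ℤ), d ≠ 0 ∧ map (Int.castRingHom ℚ) f = C (d : ℚ) * φ := by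
  obtain ⟨⟨d, hd⟩, hint⟩ :=
    IsLocalization.exist_integer_multiples_of_finset (nonZeroDivisors ℤ) φ.coeffs
  obtain ⟨f, hf⟩ : C (d : ℚ) * φ ∈ Set.range (map (Int.castRingHom ℚ)) := by
    rw [mem_range_map_iff_coeffs_subset]
    intro q hq
    obtain ⟨a, ha, rfl⟩ := mem_coeffs_iff.mp hq
    rw [mem_support_iff, coeff_C_mul] at ha
    obtain ⟨z, hz⟩ := hint _ (coeff_mem_coeffs _ (right_ne_zero_of_mul ha))
    rw [coeff_C_mul]
    exact ⟨z, by simpa using hz⟩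
  exact ⟨f, d, nonZeroDivisors.ne_zero hd, hf⟩

theorem intCast_ne_zero_of_natAbs_lt {K : Type*} [AddGroupWithOne K] (p : ℕ) [CharP K p]
    {d : ℤ} (hd : d ≠ 0) (h : d.natAbs < p) : (d : K) ≠ 0 := by
  rw [Ne, CharP.intCast_eq_zero_iff K p]
  exact fun hdvd => hd (Int.eq_zero_of_dvd_of_natAbs_lt_natAbs hdvd (by simpa using h))

/-- Cook–Nagel: if an artinian monomial algebra has the WLP in characteristic
zero, then it has the WLP over every field of sufficiently large characteristic. -/
theorem stmt9 (r : ℕ) (S : Set (Fin r →₀ ℕ))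
    (hart : Module.Finite ℚ
      (MvPolynomial (Fin r) ℚ ⧸ Ideal.span ((fun s => (monomial s (1 : ℚ))) '' S)))
    (hwlp : ∃ ℓ ∈ homogeneousSubmodule (Fin r) ℚ 1, ∀ i : ℕ,
      mulInj (Ideal.span ((fun s => (monomial s (1 : ℚ))) '' S)) ℓ i ∨
      mulSurj (Ideal.span ((fun s => (monomial s (1 : ℚ))) '' S)) ℓ i (i + 1)) :
    ∃ N : ℕ, ∀ (k : Type u) [Field k], ∀ p : ℕ, p.Prime → CharP k p → N ≤ p →
      ∃ ℓ ∈ homogeneousSubmodule (Fin r) k 1, ∀ i : ℕ,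
        mulInj (Ideal.span ((fun s => (monomial s (1 : k))) '' S)) ℓ i ∨
        mulSurj (Ideal.span ((fun s => (monomial s (1 : k))) '' S)) ℓ i (i + 1) := by
  obtain ⟨T, hT⟩ := (finite_setOf_notMem_upperClosure (K := ℚ) (S := S)).exists_finset
  obtain ⟨ℓ₀, hℓ₀, hwlp⟩ := hwlp
  obtain ⟨f, d, hd, hfd⟩ := exists_map_intCast_eq_C_mul ℓ₀
  have hdℚ : (d : ℚ) ≠ 0 := Int.cast_ne_zero.mpr hd
  have hf : f.IsHomogeneous 1 := by
    apply IsHomogeneous.of_map (RingHom.injective_int (Int.castRingHom ℚ))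
    rw [hfd, ← zero_add 1]
    exact (isHomogeneous_C _ _).mul ((mem_homogeneousSubmodule _ _).mp hℓ₀)
  have hℚ (i : ℕ) := (hwlp i).imp (fun h => hfd ▸ h.C_mul hdℚ) (fun h => hfd ▸ h.C_mul hdℚ)
  choose D hD0 hD using fun i => exists_forall_mulInj_or_mulSurj_of_rat hT hf i (hℚ i)
  set n := T.sup Finsupp.degree + 1
  refine ⟨(∏ i ∈ Finset.range n, D i).natAbs + 1, fun k _ p _ hp hN =>
    ⟨map (Int.castRingHom k) f, (mem_homogeneousSubmodule _ _).mpr (hf.map _), fun i => ?_⟩⟩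
  by_cases hi : i < n
  · have hprod : ((∏ i ∈ Finset.range n, D i : ℤ) : k) ≠ 0 :=
      intCast_ne_zero_of_natAbs_lt p (Finset.prod_ne_zero_iff.mpr fun i _ => hD0 i) (by omega)
    rw [Int.cast_prod] at hprod
    exact hD i k (Finset.prod_ne_zero_iff.mp hprod i (Finset.mem_range.mpr hi))
  · exact Or.inr (mulSurj_of_forall_degree_lt hT _ i fun a ha =>
      (Nat.lt_succ_of_le (Finset.le_sup ha)).trans_le (by omega))
end

section
/- Let k be a field, R = k[x_1,...,x_r], and suppose h = (1, h_1, ..., h_s) is the Hilbert function of an artinian graded algebra A = R/I having the Weak Lefschetz Property. Then h is unimodal: there exists an index t such that h_0 ≤ h_1 ≤ ... ≤ h_t ≥ h_{t+1} ≥ ... ≥ h_s. -/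
/-!
Since `[R]_{j+1} = [R]_j · [R]_1`, surjectivity of `×f : [A]_i → [A]_j` propagates to
`[A]_{i+1} → [A]_{j+1}`, for any `f`. So for a Lefschetz form `ℓ` there is a threshold `t`:
`×ℓ` is injective below `t`, giving `h_i ≤ h_{i+1}`, and surjective from `t` on, giving
`h_{i+1} ≤ h_i`. If `×ℓ` is never surjective, `h` is nondecreasing and bounded by `dim A`, and
one takes for `t` a degree where it attains its maximum.
-/

open MvPolynomial

lemma Nat.exists_monotoneOn_Iic_antitoneOn_Ici {f : ℕ → ℕ} (hf : BddAbove (Set.range f))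
    {P : ℕ → Prop} (hP : ∀ n, P n → P (n + 1)) (hmono : ∀ n, ¬ P n → f n ≤ f (n + 1))
    (hanti : ∀ n, P n → f (n + 1) ≤ f n) :
    ∃ t, MonotoneOn f (Set.Iic t) ∧ AntitoneOn f (Set.Ici t) := by
  classical
  by_cases hex : ∃ n, P n
  · refine ⟨Nat.find hex, monotoneOn_of_le_add_one Set.ordConnected_Iic ?_,
      antitoneOn_of_add_one_le Set.ordConnected_Ici ?_⟩
    · exact fun n _ _ hn => hmono n (Nat.find_min hex (Nat.lt_of_succ_le hn))
    · exact fun n _ hn _ => hanti n (Nat.le_induction (Nat.find_spec hex) (fun m _ => hP m) n hn)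
  · push Not at hex
    have hf_mono : Monotone f := monotone_nat_of_le_succ fun n => hmono n (hex n)
    obtain ⟨t, ht⟩ := Nat.sSup_mem (Set.range_nonempty f) hf
    refine ⟨t, hf_mono.monotoneOn _, fun a ha b _ _ => ?_⟩
    calc f b ≤ sSup (Set.range f) := le_csSup hf ⟨b, rfl⟩
      _ = f t := ht.symm
      _ ≤ f a := hf_mono ha

noncomputable def gradedPart {k σ : Type*} [CommRing k] (I : Ideal (MvPolynomial σ k)) (i : ℕ) :
    Submodule k (MvPolynomial σ k ⧸ I) :=
  (homogeneousSubmodule σ k i).map (Ideal.Quotient.mkₐ k I).toLinearMap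

namespace gradedPart

variable {k σ : Type*} [Field k] {I : Ideal (MvPolynomial σ k)} {f : MvPolynomial σ k}

instance [Finite σ] (i : ℕ) : Module.Finite k (gradedPart I i) :=
  Module.Finite.iff_fg.mpr ((homogeneousSubmodule_fg σ k i).map _)

lemma finrank_eq_hilb (i : ℕ) : Module.finrank k (gradedPart I i) = hilb I i := rfl

lemma map_mulLeft_le {d : ℕ} (hf : f ∈ homogeneousSubmodule σ k d) (i : ℕ) :
    (gradedPart I i).map (LinearMap.mulLeft k (Ideal.Quotient.mk I f)) ≤
      gradedPart I (i + d) := by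
  rintro _ ⟨_, ⟨g, hg, rfl⟩, rfl⟩
  refine ⟨f * g, ?_, map_mul (Ideal.Quotient.mk I) f g⟩
  rw [add_comm]
  exact homogeneousSubmodule_mul d i (Submodule.mul_mem_mul hf hg)

lemma le_map_mulLeft_of_mulSurj {i j : ℕ} (h : mulSurj I f i j) :
    gradedPart I j ≤ (gradedPart I i).map (LinearMap.mulLeft k (Ideal.Quotient.mk I f)) := by
  rintro _ ⟨g, hg, rfl⟩
  obtain ⟨g', hg', hgI⟩ := h g hg
  refine ⟨Ideal.Quotient.mk I g', ⟨g', hg', rfl⟩, ?_⟩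
  show Ideal.Quotient.mk I f * Ideal.Quotient.mk I g' = Ideal.Quotient.mk I g
  rw [← map_mul, eq_comm]
  exact Ideal.Quotient.eq.mpr hgI

lemma injective_mulLeft_domRestrict_of_mulInj {i : ℕ} (h : mulInj I f i) :
    Function.Injective ((LinearMap.mulLeft k (Ideal.Quotient.mk I f)).domRestrict
      (gradedPart I i)) := by
  rw [injective_iff_map_eq_zero]
  rintro ⟨_, ⟨g, hg, rfl⟩⟩ hker
  have hfg : f * g ∈ I := by
    simpa [← map_mul, Ideal.Quotient.eq_zero_iff_mem] using hker
  exact Subtype.ext (Ideal.Quotient.eq_zero_iff_mem.mpr (h g hg hfg))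

end gradedPart

section

open gradedPart

variable {k σ : Type*} [Field k] {I : Ideal (MvPolynomial σ k)} {f : MvPolynomial σ k}

lemma hilb_le_of_mulInj [Finite σ] {d i : ℕ} (hf : f ∈ homogeneousSubmodule σ k d)
    (h : mulInj I f i) : hilb I i ≤ hilb I (i + d) := by
  rw [← finrank_eq_hilb, ← finrank_eq_hilb,
    ← LinearMap.finrank_range_of_inj (injective_mulLeft_domRestrict_of_mulInj h),
    LinearMap.range_domRestrict]
  exact Submodule.finrank_mono (map_mulLeft_le hf i)

lemma hilb_le_of_mulSurj [Finite σ] {i j : ℕ} (h : mulSurj I f i j) : hilb I j ≤ hilb I i :=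
  (Submodule.finrank_mono (le_map_mulLeft_of_mulSurj h)).trans (Submodule.finrank_map_le _ _)

lemma mulSurj.add_one {i j : ℕ} (h : mulSurj I f i j) : mulSurj I f (i + 1) (j + 1) := by
  intro g hg
  rw [← homogeneousSubmodule_one_pow, pow_succ, homogeneousSubmodule_one_pow] at hg
  refine Submodule.mul_induction_on hg (fun a ha x hx => ?_) (fun a b ha hb => ?_)
  · obtain ⟨a', ha', haI⟩ := h a ha
    refine ⟨a' * x, homogeneousSubmodule_mul i 1 (Submodule.mul_mem_mul ha' hx), ?_⟩
    simpa [mul_assoc, sub_mul] using I.mul_mem_right x haI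
  · obtain ⟨a', ha', haI⟩ := ha
    obtain ⟨b', hb', hbI⟩ := hb
    refine ⟨a' + b', add_mem ha' hb', ?_⟩
    convert I.add_mem haI hbI using 1
    ring

lemma bddAbove_range_hilb [Module.Finite k (MvPolynomial σ k ⧸ I)] :
    BddAbove (Set.range (hilb I)) :=
  ⟨Module.finrank k (MvPolynomial σ k ⧸ I), by
    rintro _ ⟨i, rfl⟩
    exact Submodule.finrank_le _⟩

end

theorem stmt13_general (k : Type*) [Field k] (r : ℕ) (I : Ideal (MvPolynomial (Fin r) k))
    (hart : Module.Finite k (MvPolynomial (Fin r) k ⧸ I))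
    (hwlp : ∃ ℓ ∈ homogeneousSubmodule (Fin r) k 1, ∀ i : ℕ,
      mulInj I ℓ i ∨ mulSurj I ℓ i (i + 1)) :
    ∃ t : ℕ, (∀ i j : ℕ, i ≤ j → j ≤ t → hilb I i ≤ hilb I j) ∧
      (∀ i j : ℕ, t ≤ i → i ≤ j → hilb I j ≤ hilb I i) := by
  obtain ⟨ℓ, hℓ, hwlp⟩ := hwlp
  obtain ⟨t, hmono, hanti⟩ := Nat.exists_monotoneOn_Iic_antitoneOn_Ici bddAbove_range_hilb
    (P := fun i => mulSurj I ℓ i (i + 1)) (fun _ h => h.add_one)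
    (fun i h => hilb_le_of_mulInj hℓ ((hwlp i).resolve_right h)) (fun _ h => hilb_le_of_mulSurj h)
  exact ⟨t, fun i j hij hjt => hmono (hij.trans hjt) hjt hij,
    fun i j hti hij => hanti hti (hti.trans hij) hij⟩

/-- the Hilbert function of an artinian graded algebra with the WLP is
unimodal. -/
theorem stmt13 (k : Type*) [Field k] (r : ℕ) (I : Ideal (MvPolynomial (Fin r) k))
    (hhom : ∀ f ∈ I, ∀ n : ℕ, homogeneousComponent n f ∈ I)
    (hart : Module.Finite k (MvPolynomial (Fin r) k ⧸ I))
    (hwlp : ∃ ℓ ∈ homogeneousSubmodule (Fin r) k 1, ∀ i : ℕ,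
      mulInj I ℓ i ∨ mulSurj I ℓ i (i + 1)) :
    ∃ t : ℕ, (∀ i j : ℕ, i ≤ j → j ≤ t → hilb I i ≤ hilb I j) ∧
      (∀ i j : ℕ, t ≤ i → i ≤ j → hilb I j ≤ hilb I i) :=
  stmt13_general k r I hart hwlp
end

section
/- Let k be a field of characteristic zero, R = k[x_1,...,x_{r+1}], ℓ ∈ R a general linear form, and S = R/(ℓ) ≅ k[x_1,...,x_r]. Let L_1,...,L_{s+1} ∈ R be linear forms and d_1,...,d_{s+1} positive integers, and let I = (L_1^{d_1},...,L_s^{d_s}). Assume (i) R/I has the WLP with respect to ℓ, and (ii) for all j, multiplication by the restriction of L_{s+1}^{d_{s+1}} on S/Ī from degree j − d_{s+1} to degree j has maximal rank, where Ī is the image of I in S. Then R/(L_1^{d_1},...,L_{s+1}^{d_{s+1}}) has the WLP with respect to ℓ. -/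
open MvPolynomial

/-- Homogeneous component of a product with a homogeneous polynomial on the left. -/
lemma comp_mul_hom {k : Type*} [Field k] {σ : Type*} {F : MvPolynomial σ k} {dd : ℕ}
    (hF : F.IsHomogeneous dd) (c : MvPolynomial σ k) (n : ℕ) :
    homogeneousComponent n (F * c) =
      if dd ≤ n then F * homogeneousComponent (n - dd) c else 0 := by
  conv_lhs => rw [← sum_homogeneousComponent c, Finset.mul_sum, map_sum]
  have key : ∀ m : ℕ, homogeneousComponent n (F * homogeneousComponent m c) =
      if n = dd + m then F * homogeneousComponent m c else 0 := fun m =>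
    homogeneousComponent_of_mem
      ((mem_homogeneousSubmodule _ _).2 (hF.mul (homogeneousComponent_isHomogeneous m c)))
  simp only [key]
  by_cases h : dd ≤ n
  · rw [if_pos h]
    have hcond : ∀ m : ℕ, (n = dd + m) ↔ (m = n - dd) := fun m => by omega
    simp only [hcond]
    rw [Finset.sum_ite_eq' (Finset.range (c.totalDegree + 1)) (n - dd)
      (fun m => F * homogeneousComponent m c)]
    split
    · rfl
    · rename_i hnot
      rw [Finset.mem_range, not_lt] at hnot
      rw [homogeneousComponent_eq_zero _ c (by omega), mul_zero]
  · rw [if_neg h]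
    apply Finset.sum_eq_zero
    intro m _
    rw [if_neg (by omega)]

/-- An ideal spanned by homogeneous elements contains all homogeneous components of its
elements. -/
lemma comp_mem_span {k : Type*} [Field k] {σ : Type*} {S : Set (MvPolynomial σ k)}
    (hS : ∀ p ∈ S, ∃ n, p.IsHomogeneous n) {x : MvPolynomial σ k}
    (hx : x ∈ Ideal.span S) (n : ℕ) : homogeneousComponent n x ∈ Ideal.span S := by
  induction hx using Submodule.span_induction generalizing n with
  | mem p hp =>
    obtain ⟨m, hm⟩ := hS p hp
    rw [homogeneousComponent_of_mem ((mem_homogeneousSubmodule _ _).2 hm)]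
    split
    · exact Ideal.subset_span hp
    · exact Ideal.zero_mem _
  | zero => simp only [map_zero]; exact Ideal.zero_mem _
  | add x y hx hy ihx ihy =>
    rw [map_add]; exact Ideal.add_mem _ (ihx n) (ihy n)
  | smul a x hx ih =>
    have ha : a • x = ∑ m ∈ Finset.range (a.totalDegree + 1),
        homogeneousComponent m a * x := by
      rw [← Finset.sum_mul, sum_homogeneousComponent, smul_eq_mul]
    rw [ha, map_sum]
    apply Ideal.sum_mem
    intro m _
    rw [comp_mul_hom (homogeneousComponent_isHomogeneous m a) x n]
    split
    · exact Ideal.mul_mem_left _ _ (ih _)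
    · exact Ideal.zero_mem _

/-- MMN: WLP for ideals of powers of linear forms, added one power at a time.
Here `R = k[x_1,...,x_{r+1}]`, `S = R/(ℓ)` and condition (ii), maximal rank of
multiplication by the restriction of `L_{s+1}^{d_{s+1}}` on `S/Ī`, is expressed via the
isomorphism `S/Ī ≅ R/(I,ℓ)`. -/
theorem stmt14 (k : Type*) [Field k] [CharZero k] (r s : ℕ)
    (ℓ : MvPolynomial (Fin (r + 1)) k) (hℓ : ℓ ∈ homogeneousSubmodule (Fin (r + 1)) k 1)
    (hℓ0 : ℓ ≠ 0)
    (L : Fin (s + 1) → MvPolynomial (Fin (r + 1)) k)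
    (hL : ∀ i, L i ∈ homogeneousSubmodule (Fin (r + 1)) k 1)
    (d : Fin (s + 1) → ℕ) (hd : ∀ i, 0 < d i)
    (I : Ideal (MvPolynomial (Fin (r + 1)) k))
    (hI : I = Ideal.span (Set.range fun i : Fin s => L i.castSucc ^ d i.castSucc))
    -- (i): R/I has the WLP with respect to ℓ
    (h1 : ∀ i : ℕ, mulInj I ℓ i ∨ mulSurj I ℓ i (i + 1))
    -- (ii): ×L_{s+1}^{d_{s+1}} has maximal rank on S/Ī ≅ R/(I,ℓ) in every degree
    (h2 : ∀ j : ℕ, mulInj (I ⊔ Ideal.span {ℓ}) (L (Fin.last s) ^ d (Fin.last s)) j ∨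
      mulSurj (I ⊔ Ideal.span {ℓ}) (L (Fin.last s) ^ d (Fin.last s)) j (j + d (Fin.last s))) :
    ∀ i : ℕ, mulInj (I ⊔ Ideal.span {L (Fin.last s) ^ d (Fin.last s)}) ℓ i ∨
      mulSurj (I ⊔ Ideal.span {L (Fin.last s) ^ d (Fin.last s)}) ℓ i (i + 1) := by
  set F : MvPolynomial (Fin (r + 1)) k := L (Fin.last s) ^ d (Fin.last s) with hFdef
  set dd : ℕ := d (Fin.last s) with hdd
  have hℓh : ℓ.IsHomogeneous 1 := (mem_homogeneousSubmodule _ _).1 hℓ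
  have hFh : F.IsHomogeneous dd := by
    simpa using ((mem_homogeneousSubmodule _ _).1 (hL (Fin.last s))).pow dd
  -- homogeneity of the three ideals
  have hIhom : ∀ x ∈ I, ∀ n, homogeneousComponent n x ∈ I := by
    intro x hx n
    rw [hI] at hx ⊢
    refine comp_mem_span ?_ hx n
    rintro p ⟨j, rfl⟩
    refine ⟨d j.castSucc, ?_⟩
    simpa using ((mem_homogeneousSubmodule _ _).1 (hL j.castSucc)).pow (d j.castSucc)
  -- the composite ideal J
  set J : Ideal (MvPolynomial (Fin (r + 1)) k) := I ⊔ Ideal.span {F} with hJdef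
  have hIJ : I ≤ J := le_sup_left
  -- multiplication by F lands in J
  have hFJ : ∀ c : MvPolynomial (Fin (r + 1)) k, F * c ∈ J := fun c =>
    Submodule.mem_sup_right (Ideal.mem_span_singleton'.2 ⟨c, mul_comm _ _⟩)
  -- surjectivity is monotone in the ideal
  have mono : ∀ i, mulSurj I ℓ i (i + 1) → mulSurj J ℓ i (i + 1) := by
    intro i hs g hg
    obtain ⟨h, hh, hmem⟩ := hs g hg
    exact ⟨h, hh, hIJ hmem⟩
  intro i
  by_cases hdi : dd ≤ i + 1
  · rcases h2 (i + 1 - dd) with hinj2 | hsurj2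
    · rcases h1 i with hinj1 | hsurj1
      · -- injectivity of ×ℓ on R/J in degree i
        left
        intro g hg hℓg
        have hgh : g.IsHomogeneous i := (mem_homogeneousSubmodule _ _).1 hg
        -- decompose ℓ * g = a + F * c with a ∈ I
        obtain ⟨a, haI, w, hw, heq0⟩ := Submodule.mem_sup.1 hℓg
        obtain ⟨c, hc⟩ := Ideal.mem_span_singleton'.1 hw
        have heq : ℓ * g = a + F * c := by rw [← heq0, ← hc, mul_comm c F]
        have hlg : (ℓ * g) ∈ homogeneousSubmodule (Fin (r + 1)) k (i + 1) := by
          rw [mem_homogeneousSubmodule]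
          simpa [Nat.add_comm] using hℓh.mul hgh
        -- take homogeneous components in degree i+1
        have h3 : ℓ * g = homogeneousComponent (i + 1) a
            + F * homogeneousComponent (i + 1 - dd) c := by
          have := congrArg (homogeneousComponent (i + 1)) heq
          rwa [homogeneousComponent_of_mem hlg, if_pos rfl, map_add,
            comp_mul_hom hFh c (i + 1), if_pos hdi] at this
        set b := homogeneousComponent (i + 1 - dd) c with hb
        have hbdeg : b ∈ homogeneousSubmodule (Fin (r + 1)) k (i + 1 - dd) :=
          (mem_homogeneousSubmodule _ _).2
            (homogeneousComponent_isHomogeneous (i + 1 - dd) c)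
        have hFb : F * b ∈ I ⊔ Ideal.span {ℓ} := by
          have hfb : F * b = ℓ * g - homogeneousComponent (i + 1) a := by
            rw [h3]; ring
          rw [hfb]
          exact Submodule.sub_mem _
            (Submodule.mem_sup_right (Ideal.mem_span_singleton'.2 ⟨g, mul_comm _ _⟩))
            (Submodule.mem_sup_left (hIhom a haI (i + 1)))
        have hbIl : b ∈ I ⊔ Ideal.span {ℓ} := hinj2 b hbdeg hFb
        obtain ⟨a', ha'I, w', hw', heq0'⟩ := Submodule.mem_sup.1 hbIl
        obtain ⟨c', hc'⟩ := Ideal.mem_span_singleton'.1 hw'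
        have hbeq : b = a' + c' * ℓ := by rw [← heq0', ← hc']
        -- ℓ * (g - F * c') ∈ I
        have h5 : ℓ * (g - F * c') ∈ I := by
          have : ℓ * (g - F * c') = homogeneousComponent (i + 1) a + F * a' := by
            linear_combination h3 + F * hbeq
          rw [this]
          exact Ideal.add_mem _ (hIhom a haI (i + 1)) (Ideal.mul_mem_left _ _ ha'I)
        -- take components in degree i+1 again to homogenize c'
        have h6 : ℓ * (g - homogeneousComponent i (F * c')) ∈ I := by
          have hcomp := hIhom _ h5 (i + 1)
          rwa [comp_mul_hom hℓh (g - F * c') (i + 1), if_pos (by omega),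
            Nat.add_sub_cancel, map_sub,
            homogeneousComponent_of_mem hg, if_pos rfl] at hcomp
        have h7 : g - homogeneousComponent i (F * c')
            ∈ homogeneousSubmodule (Fin (r + 1)) k i :=
          Submodule.sub_mem _ hg ((mem_homogeneousSubmodule _ _).2
            (homogeneousComponent_isHomogeneous i (F * c')))
        have h8 : g - homogeneousComponent i (F * c') ∈ I := hinj1 _ h7 h6
        have h9 : homogeneousComponent i (F * c') ∈ J := by
          rw [comp_mul_hom hFh c' i]
          split
          · exact hFJ _
          · exact Ideal.zero_mem _
        have : g = (g - homogeneousComponent i (F * c'))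
            + homogeneousComponent i (F * c') := by ring
        rw [this]
        exact Ideal.add_mem _ (hIJ h8) h9
      · exact Or.inr (mono i hsurj1)
    · -- surjectivity of ×ℓ on R/J from degree i to i+1
      right
      intro g hg
      have hg' : g ∈ homogeneousSubmodule (Fin (r + 1)) k ((i + 1 - dd) + dd) := by
        rwa [Nat.sub_add_cancel hdi]
      obtain ⟨h₀, hh₀, hmem⟩ := hsurj2 g hg'
      obtain ⟨a, haI, w, hw, heq0⟩ := Submodule.mem_sup.1 hmem
      obtain ⟨c, hc⟩ := Ideal.mem_span_singleton'.1 hw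
      refine ⟨homogeneousComponent i c, (mem_homogeneousSubmodule _ _).2
        (homogeneousComponent_isHomogeneous i c), ?_⟩
      have heq : g - ℓ * c = F * h₀ + a := by
        rw [mul_comm ℓ c, hc]
        have : g - F * h₀ = a + w := heq0.symm
        rw [eq_comm]
        linear_combination -this
      have hFh₀ : (F * h₀) ∈ homogeneousSubmodule (Fin (r + 1)) k (i + 1) := by
        rw [mem_homogeneousSubmodule]
        have h := hFh.mul ((mem_homogeneousSubmodule _ _).1 hh₀)
        rwa [show dd + (i + 1 - dd) = i + 1 from by omega] at h
      have hcomp := congrArg (homogeneousComponent (i + 1)) heq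
      rw [map_sub, homogeneousComponent_of_mem hg, if_pos rfl,
        comp_mul_hom hℓh c (i + 1), if_pos (by omega), Nat.add_sub_cancel, map_add,
        homogeneousComponent_of_mem hFh₀, if_pos rfl] at hcomp
      rw [hcomp]
      exact Ideal.add_mem _ (hFJ h₀) (hIJ (hIhom a haI (i + 1)))
  · -- dd > i + 1 : the new generator does not affect degrees ≤ i + 1
    rcases h1 i with hinj1 | hsurj1
    · left
      intro g hg hℓg
      have hgh : g.IsHomogeneous i := (mem_homogeneousSubmodule _ _).1 hg
      obtain ⟨a, haI, w, hw, heq0⟩ := Submodule.mem_sup.1 hℓg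
      obtain ⟨c, hc⟩ := Ideal.mem_span_singleton'.1 hw
      have heq : ℓ * g = a + F * c := by rw [← heq0, ← hc, mul_comm c F]
      have hlg : (ℓ * g) ∈ homogeneousSubmodule (Fin (r + 1)) k (i + 1) := by
        rw [mem_homogeneousSubmodule]
        simpa [Nat.add_comm] using hℓh.mul hgh
      have h3 : ℓ * g ∈ I := by
        have := congrArg (homogeneousComponent (i + 1)) heq
        rw [homogeneousComponent_of_mem hlg, if_pos rfl, map_add,
          comp_mul_hom hFh c (i + 1), if_neg hdi, add_zero] at this
        rw [this]
        exact hIhom a haI (i + 1)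
      exact hIJ (hinj1 g hg h3)
    · exact Or.inr (mono i hsurj1)
end

section
/- Let k have characteristic zero and let A be an artinian graded algebra with the Weak Lefschetz Property and Hilbert function (h_0, h_1, ..., h_s). If h_{i−1} > h_i for some i ≤ s, then h_j ≥ h_{j+1} for all j with i − 1 ≤ j < s; i.e., once the Hilbert function of a WLP algebra strictly decreases, it is non-increasing thereafter. -/
open MvPolynomial

/-!
Write `A = R/I` and `A_i` (`degreePart I i`) for the image of the degree-`i` polynomials.
Since `R` is generated in degree one, `A_{j+1} = R_1 A_j`; hence if `ℓ A_j` exhausts `A_{j+1}`,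
then `A_{j+2} = R_1 A_{j+1} = R_1 ℓ A_j = ℓ R_1 A_j = ℓ A_{j+1}`. A strict drop `h_{i+1} < h_i`
rules out injectivity of `×ℓ : A_i → A_{i+1}`, so by the WLP it is surjective, and then so is
every later `×ℓ : A_j → A_{j+1}`, which gives `h_{j+1} ≤ h_j`.
-/

namespace MvPolynomial

theorem homogeneousSubmodule_succ {σ R : Type*} [CommSemiring R] (n : ℕ) :
    homogeneousSubmodule σ R (n + 1) =
      homogeneousSubmodule σ R 1 * homogeneousSubmodule σ R n := by
  rw [← homogeneousSubmodule_one_pow, ← homogeneousSubmodule_one_pow (σ := σ) (R := R) n,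
    pow_succ']

end MvPolynomial

section DegreePart

variable {k σ : Type*} [Field k] (I : Ideal (MvPolynomial σ k))

noncomputable abbrev degreePart (i : ℕ) : Submodule k (MvPolynomial σ k ⧸ I) :=
  (homogeneousSubmodule σ k i).map (Ideal.Quotient.mkₐ k I).toLinearMap

instance [Finite σ] (i : ℕ) : Module.Finite k (degreePart I i) :=
  Module.Finite.iff_fg.mpr ((homogeneousSubmodule_fg σ k i).map _)

variable {I}

theorem mk_mul_mem_degreePart {f : MvPolynomial σ k} {m i : ℕ}
    (hf : f ∈ homogeneousSubmodule σ k m) {x : MvPolynomial σ k ⧸ I}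
    (hx : x ∈ degreePart I i) : Ideal.Quotient.mk I f * x ∈ degreePart I (i + m) := by
  obtain ⟨g, hg, rfl⟩ := hx
  refine ⟨f * g, ?_, by simp⟩
  rw [add_comm]
  exact homogeneousSubmodule_mul m i (Submodule.mul_mem_mul hf hg)

theorem hilb_le_hilb_succ_of_mulInj [Finite σ] {ℓ : MvPolynomial σ k}
    (hℓ : ℓ ∈ homogeneousSubmodule σ k 1) {i : ℕ} (h : mulInj I ℓ i) :
    hilb I i ≤ hilb I (i + 1) := by
  let mulℓ : degreePart I i →ₗ[k] degreePart I (i + 1) :=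
    (LinearMap.mulLeft k (Ideal.Quotient.mk I ℓ)).restrict fun _ hx ↦
      mk_mul_mem_degreePart hℓ hx
  refine LinearMap.finrank_le_finrank_of_injective (f := mulℓ) ?_
  rw [← LinearMap.ker_eq_bot, LinearMap.ker_eq_bot']
  rintro ⟨_, g, hg, rfl⟩ hzero
  have hℓg : ℓ * g ∈ I := by
    rw [← Ideal.Quotient.eq_zero_iff_mem, map_mul]
    exact congrArg Subtype.val hzero
  exact Subtype.ext (Ideal.Quotient.eq_zero_iff_mem.mpr (h g hg hℓg))

theorem degreePart_le_map_of_mulSurj {ℓ : MvPolynomial σ k} {i j : ℕ} (h : mulSurj I ℓ i j) :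
    degreePart I j ≤ (degreePart I i).map (LinearMap.mulLeft k (Ideal.Quotient.mk I ℓ)) := by
  rintro _ ⟨g, hg, rfl⟩
  obtain ⟨f, hf, hgf⟩ := h g hg
  refine ⟨Ideal.Quotient.mk I f, ⟨f, hf, rfl⟩, ?_⟩
  rw [LinearMap.mulLeft_apply, ← map_mul, eq_comm]
  exact Ideal.Quotient.eq.mpr hgf

theorem hilb_le_of_degreePart_le_map [Finite σ] {a : MvPolynomial σ k ⧸ I} {i j : ℕ}
    (h : degreePart I j ≤ (degreePart I i).map (LinearMap.mulLeft k a)) :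
    hilb I j ≤ hilb I i :=
  (Submodule.finrank_mono h).trans (Submodule.finrank_map_le _ _)

theorem degreePart_succ_le_map_succ {ℓ : MvPolynomial σ k} {j : ℕ}
    (h : degreePart I (j + 1) ≤
      (degreePart I j).map (LinearMap.mulLeft k (Ideal.Quotient.mk I ℓ))) :
    degreePart I (j + 2) ≤
      (degreePart I (j + 1)).map (LinearMap.mulLeft k (Ideal.Quotient.mk I ℓ)) := by
  rw [degreePart, homogeneousSubmodule_succ, Submodule.map_le_iff_le_comap, Submodule.mul_le]
  intro a ha b hb
  obtain ⟨c, hc, hcb⟩ := h ⟨b, hb, rfl⟩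
  refine ⟨Ideal.Quotient.mk I a * c, mk_mul_mem_degreePart ha hc, ?_⟩
  simp only [LinearMap.mulLeft_apply, AlgHom.toLinearMap_apply, Ideal.Quotient.mkₐ_eq_mk,
    map_mul] at hcb ⊢
  rw [← hcb, mul_left_comm]

end DegreePart

theorem stmt18_general (k : Type*) [Field k] (r : ℕ)
    (I : Ideal (MvPolynomial (Fin r) k))
    (hwlp : ∃ ℓ ∈ homogeneousSubmodule (Fin r) k 1, ∀ i : ℕ,
      mulInj I ℓ i ∨ mulSurj I ℓ i (i + 1))
    (i : ℕ) (hdec : hilb I (i + 1) < hilb I i) :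
    ∀ j : ℕ, i ≤ j → hilb I (j + 1) ≤ hilb I j := by
  obtain ⟨ℓ, hℓ, hwlp⟩ := hwlp
  have hsurj : mulSurj I ℓ i (i + 1) :=
    (hwlp i).resolve_left fun hinj ↦ (hilb_le_hilb_succ_of_mulInj hℓ hinj).not_gt hdec
  have hmap : ∀ j, i ≤ j → degreePart I (j + 1) ≤
      (degreePart I j).map (LinearMap.mulLeft k (Ideal.Quotient.mk I ℓ)) := by
    intro j hij
    induction j, hij using Nat.le_induction with
    | base => exact degreePart_le_map_of_mulSurj hsurj
    | succ n _ ih => exact degreePart_succ_le_map_succ ih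
  exact fun j hij ↦ hilb_le_of_degreePart_le_map (hmap j hij)

/-- once the Hilbert function of an artinian WLP algebra (char 0) strictly
decreases, it is non-increasing from that point on. -/
theorem stmt18 (k : Type*) [Field k] [CharZero k] (r : ℕ)
    (I : Ideal (MvPolynomial (Fin r) k))
    (hhom : ∀ f ∈ I, ∀ n : ℕ, homogeneousComponent n f ∈ I)
    (hart : Module.Finite k (MvPolynomial (Fin r) k ⧸ I))
    (hwlp : ∃ ℓ ∈ homogeneousSubmodule (Fin r) k 1, ∀ i : ℕ,
      mulInj I ℓ i ∨ mulSurj I ℓ i (i + 1))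
    (i : ℕ) (hdec : hilb I (i + 1) < hilb I i) :
    ∀ j : ℕ, i ≤ j → hilb I (j + 1) ≤ hilb I j :=
  stmt18_general k r I hwlp i hdec
end
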